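/- Let f : ℝ³ → ℝ be smooth, let α, c, χ ∈ ℝ, and suppose L_c^{(α)}f(x) = χ·f(x) for all x ∈ ℝ³. Then the angular gradient x×∇f is a divergence free vectorial eigenfunction with the same eigenvalue: for every x ∈ ℝ³, L_c^{(α)}(y ↦ (y×∇f)(y))(x) = χ·(x×∇f)(x) (componentwise) and ∇·(y ↦ (y×∇f)(y))(x) = 0. -/

import Mathlib

noncomputable section
open MeasureTheory
open scoped RealInnerProductSpace

/-- ℝ³ with the Euclidean structure. -/
abbrev E3 : Type := EuclideanSpace ℝ (Fin 3)

/-- The `i`-th partial derivative ∂ᵢ f. -/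
def pd (i : Fin 3) (f : E3 → ℝ) (x : E3) : ℝ := fderiv ℝ f x (EuclideanSpace.single i 1)

/-- Build a vector of E3 from its three coordinates. -/
def vec (a b c : ℝ) : E3 := (WithLp.equiv 2 (Fin 3 → ℝ)).symm ![a, b, c]

/-- The gradient ∇f. -/
def grad (f : E3 → ℝ) (x : E3) : E3 := vec (pd 0 f x) (pd 1 f x) (pd 2 f x)

/-- The Laplacian Δf = ∂₁²f + ∂₂²f + ∂₃²f. -/
def lap (f : E3 → ℝ) (x : E3) : ℝ := pd 0 (pd 0 f) x + pd 1 (pd 1 f) x + pd 2 (pd 2 f) x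

/-- The radial derivative (x·∇f)(x) = ⟨x, ∇f(x)⟩. -/
def rad (f : E3 → ℝ) (x : E3) : ℝ := ⟪x, grad f x⟫

/-- The cross product in ℝ³. -/
def cross (a b : E3) : E3 :=
  vec (a 1 * b 2 - a 2 * b 1) (a 2 * b 0 - a 0 * b 2) (a 0 * b 1 - a 1 * b 0)

/-- The angular gradient (x×∇f)(x) = x × ∇f(x). -/
def angGrad (f : E3 → ℝ) (x : E3) : E3 := cross x (grad f x)

/-- The divergence ∇·F. -/
def fdiv (F : E3 → E3) (x : E3) : ℝ :=
  pd 0 (fun y => F y 0) x + pd 1 (fun y => F y 1) x + pd 2 (fun y => F y 2) x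

/-- The curl ∇×F. -/
def curl (F : E3 → E3) (x : E3) : E3 :=
  vec (pd 1 (fun y => F y 2) x - pd 2 (fun y => F y 1) x)
      (pd 2 (fun y => F y 0) x - pd 0 (fun y => F y 2) x)
      (pd 0 (fun y => F y 1) x - pd 1 (fun y => F y 0) x)

/-- The Laplace–Beltrami operator Δ₀f(x) = ‖x‖²Δf(x) − (x·∇)(x·∇f)(x) − (x·∇f)(x). -/
def lapBel (f : E3 → ℝ) (x : E3) : ℝ := ‖x‖^2 * lap f x - rad (rad f) x - rad f x

/-- Laplace–Beltrami acting componentwise on vector fields. -/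
def lapBelV (F : E3 → E3) (x : E3) : E3 :=
  vec (lapBel (fun y => F y 0) x) (lapBel (fun y => F y 1) x) (lapBel (fun y => F y 2) x)

/-- The Sturm–Liouville operator of the first kind
L_c^{(α)}f = −Δf + (x·∇)(x·∇f) + (2α+3)(x·∇f) + c²‖x‖²f. -/
def SL (α c : ℝ) (f : E3 → ℝ) (x : E3) : ℝ :=
  -lap f x + rad (rad f) x + (2*α+3) * rad f x + c^2 * ‖x‖^2 * f x

/-- L_c^{(α)} acting componentwise on vector fields. -/
def SLv (α c : ℝ) (F : E3 → E3) (x : E3) : E3 :=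
  vec (SL α c (fun y => F y 0) x) (SL α c (fun y => F y 1) x) (SL α c (fun y => F y 2) x)

/-- The Sturm–Liouville operator of the second kind
D_c^{(α)}F(x) = (1−‖x‖²)^{−α}·(∇×((1−‖y‖²)^{α+1}∇×F))(x) − Δ₀F(x) + c²‖x‖²F(x). -/
def Dop (α c : ℝ) (F : E3 → E3) (x : E3) : E3 :=
  ((1 - ‖x‖^2) ^ (-α) : ℝ) • curl (fun y => ((1 - ‖y‖^2) ^ (α+1) : ℝ) • curl F y) x
    - lapBelV F x + (c^2 * ‖x‖^2) • F x

/-- The operator (xᵢ∂ⱼ − xⱼ∂ᵢ). -/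
def angDer (i j : Fin 3) (g : E3 → ℝ) (y : E3) : ℝ := y i * pd j g y - y j * pd i g y

local notation "SM" => ContDiff ℝ (⊤:ℕ∞)

lemma dAt {F : Type*} [NormedAddCommGroup F] [NormedSpace ℝ F] {g : E3 → F}
    (hg : ContDiff ℝ (⊤:ℕ∞) g) (x : E3) : DifferentiableAt ℝ g x :=
  (hg.differentiable (by simp)).differentiableAt

lemma smooth_pd {f : E3 → ℝ} (hf : SM f) (k : Fin 3) : SM (pd k f) := by
  have h2 : ContDiff ℝ (⊤:ℕ∞) (fderiv ℝ f) := hf.fderiv_right (le_refl _)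
  exact (ContinuousLinearMap.apply ℝ ℝ (EuclideanSpace.single k (1:ℝ))).contDiff.comp h2

lemma smooth_coord (i : Fin 3) : SM (fun y : E3 => y i) :=
  (EuclideanSpace.proj i : E3 →L[ℝ] ℝ).contDiff

lemma pd_add {g h : E3 → ℝ} {x : E3} (hg : DifferentiableAt ℝ g x)
    (hh : DifferentiableAt ℝ h x) (k : Fin 3) :
    pd k (fun y => g y + h y) x = pd k g x + pd k h x := by
  simp only [pd, fderiv_fun_add hg hh, ContinuousLinearMap.add_apply]

lemma pd_sub {g h : E3 → ℝ} {x : E3} (hg : DifferentiableAt ℝ g x)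
    (hh : DifferentiableAt ℝ h x) (k : Fin 3) :
    pd k (fun y => g y - h y) x = pd k g x - pd k h x := by
  simp only [pd, fderiv_fun_sub hg hh, ContinuousLinearMap.sub_apply]

lemma pd_neg {g : E3 → ℝ} {x : E3} (k : Fin 3) :
    pd k (fun y => -g y) x = -pd k g x := by
  simp only [pd, fderiv_fun_neg, ContinuousLinearMap.neg_apply]

lemma pd_const_mul {g : E3 → ℝ} {x : E3} (hg : DifferentiableAt ℝ g x) (a : ℝ) (k : Fin 3) :
    pd k (fun y => a * g y) x = a * pd k g x := by
  simp only [pd, fderiv_const_mul hg, ContinuousLinearMap.smul_apply, smul_eq_mul]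

lemma pd_mul {g h : E3 → ℝ} {x : E3} (hg : DifferentiableAt ℝ g x)
    (hh : DifferentiableAt ℝ h x) (k : Fin 3) :
    pd k (fun y => g y * h y) x = pd k g x * h x + g x * pd k h x := by
  simp only [pd, fderiv_fun_mul hg hh, ContinuousLinearMap.add_apply,
    ContinuousLinearMap.smul_apply, smul_eq_mul]
  ring

lemma pd_coord (i k : Fin 3) (x : E3) :
    pd k (fun y : E3 => y i) x = if i = k then 1 else 0 := by
  have e : (fun y : E3 => y i) = (EuclideanSpace.proj i : E3 →L[ℝ] ℝ) := rfl
  rw [pd, e, ContinuousLinearMap.fderiv]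
  simp [EuclideanSpace.proj, EuclideanSpace.single_apply]

lemma pd_coord_mul {g : E3 → ℝ} {x : E3} (hg : DifferentiableAt ℝ g x) (i k : Fin 3) :
    pd k (fun y => y i * g y) x = (if i = k then 1 else 0) * g x + x i * pd k g x := by
  have hgi : DifferentiableAt ℝ (fun y : E3 => y i) x :=
    (EuclideanSpace.proj i : E3 →L[ℝ] ℝ).differentiableAt
  rw [pd_mul hgi hg, pd_coord]

lemma pd_comm {f : E3 → ℝ} (hf : SM f) (a b : Fin 3) (x : E3) :
    pd a (pd b f) x = pd b (pd a f) x := by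
  have hdf : ContDiff ℝ (⊤:ℕ∞) (fderiv ℝ f) := hf.fderiv_right (le_refl _)
  have hdx : DifferentiableAt ℝ (fderiv ℝ f) x := dAt hdf x
  have key : ∀ v w : E3, fderiv ℝ (fun y => fderiv ℝ f y v) x w
      = fderiv ℝ (fderiv ℝ f) x w v := by
    intro v w
    rw [fderiv_clm_apply hdx (differentiableAt_const v)]
    simp
  have symm := second_derivative_symmetric (f' := fderiv ℝ f)
      (f'' := fderiv ℝ (fderiv ℝ f) x)
      (fun y => (dAt hf y).hasFDerivAt) hdx.hasFDerivAt
  rw [show pd a (pd b f) x = fderiv ℝ (fderiv ℝ f) x (EuclideanSpace.single a 1) (EuclideanSpace.single b 1) from key _ _,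
      show pd b (pd a f) x = fderiv ℝ (fderiv ℝ f) x (EuclideanSpace.single b 1) (EuclideanSpace.single a 1) from key _ _]
  exact symm _ _


lemma vec_0 (a b c : ℝ) : vec a b c 0 = a := rfl
lemma vec_1 (a b c : ℝ) : vec a b c 1 = b := rfl
lemma vec_2 (a b c : ℝ) : vec a b c 2 = c := rfl

lemma rad_eq (g : E3 → ℝ) (x : E3) :
    rad g x = x 0 * pd 0 g x + x 1 * pd 1 g x + x 2 * pd 2 g x := by
  simp [rad, grad, vec, PiLp.inner_apply, Fin.sum_univ_three, RCLike.inner_apply,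
    conj_trivial]
  ring

lemma rad_fun (g : E3 → ℝ) :
    rad g = fun x => x 0 * pd 0 g x + x 1 * pd 1 g x + x 2 * pd 2 g x := funext (rad_eq g)

lemma normsq (x : E3) : ‖x‖^2 = x 0 * x 0 + x 1 * x 1 + x 2 * x 2 := by
  rw [EuclideanSpace.norm_eq, Real.sq_sqrt (by positivity)]
  simp [Fin.sum_univ_three, Real.norm_eq_abs, sq_abs]
  ring

lemma deltaL (i : Fin 3) (T : Fin 3 → ℝ) :
    (if i = 0 then (1:ℝ) else 0) * T 0 + (if i = 1 then (1:ℝ) else 0) * T 1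
      + (if i = 2 then (1:ℝ) else 0) * T 2 = T i := by
  fin_cases i <;> simp

lemma deltaR (k : Fin 3) (T : Fin 3 → ℝ) :
    (if 0 = k then (1:ℝ) else 0) * T 0 + (if 1 = k then (1:ℝ) else 0) * T 1
      + (if 2 = k then (1:ℝ) else 0) * T 2 = T k := by
  fin_cases k <;> simp

lemma smooth_angDer {h : E3 → ℝ} (hh : SM h) (i j : Fin 3) : SM (angDer i j h) :=
  ((smooth_coord i).mul (smooth_pd hh j)).sub ((smooth_coord j).mul (smooth_pd hh i))

lemma smooth_rad {h : E3 → ℝ} (hh : SM h) : SM (rad h) := by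
  rw [rad_fun]
  exact (((smooth_coord 0).mul (smooth_pd hh 0)).add
    ((smooth_coord 1).mul (smooth_pd hh 1))).add ((smooth_coord 2).mul (smooth_pd hh 2))

lemma smooth_lap {h : E3 → ℝ} (hh : SM h) : SM (lap h) := by
  have : lap h = fun x => pd 0 (pd 0 h) x + pd 1 (pd 1 h) x + pd 2 (pd 2 h) x := rfl
  rw [this]
  exact ((smooth_pd (smooth_pd hh 0) 0).add (smooth_pd (smooth_pd hh 1) 1)).add
    (smooth_pd (smooth_pd hh 2) 2)

lemma normsq_mul_fun (h : E3 → ℝ) : (fun y : E3 => ‖y‖^2 * h y)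
    = fun y => y 0 * (y 0 * h y) + y 1 * (y 1 * h y) + y 2 * (y 2 * h y) := by
  funext y; rw [normsq]; ring

lemma smooth_normsq_mul {h : E3 → ℝ} (hh : SM h) : SM (fun y : E3 => ‖y‖^2 * h y) := by
  rw [normsq_mul_fun]
  exact (((smooth_coord 0).mul ((smooth_coord 0).mul hh)).add
    ((smooth_coord 1).mul ((smooth_coord 1).mul hh))).add
    ((smooth_coord 2).mul ((smooth_coord 2).mul hh))

lemma pd_angDer {h : E3 → ℝ} (hh : SM h) (i j k : Fin 3) (x : E3) :
    pd k (angDer i j h) x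
      = ((if i = k then 1 else 0) * pd j h x + x i * pd k (pd j h) x)
        - ((if j = k then 1 else 0) * pd i h x + x j * pd k (pd i h) x) := by
  have h1 : DifferentiableAt ℝ (fun y : E3 => y i * pd j h y) x :=
    dAt ((smooth_coord i).mul (smooth_pd hh j)) x
  have h2 : DifferentiableAt ℝ (fun y : E3 => y j * pd i h y) x :=
    dAt ((smooth_coord j).mul (smooth_pd hh i)) x
  show pd k (fun y => y i * pd j h y - y j * pd i h y) x = _
  rw [pd_sub h1 h2 k, pd_coord_mul (dAt (smooth_pd hh j) x) i k,
    pd_coord_mul (dAt (smooth_pd hh i) x) j k]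

lemma pd_pd_angDer {h : E3 → ℝ} (hh : SM h) (i j k : Fin 3) (x : E3) :
    pd k (pd k (angDer i j h)) x
      = (2*(if i = k then 1 else 0) * pd k (pd j h) x + x i * pd k (pd k (pd j h)) x)
        - (2*(if j = k then 1 else 0) * pd k (pd i h) x + x j * pd k (pd k (pd i h)) x) := by
  have hfe : pd k (angDer i j h) = fun x =>
      ((if i = k then (1:ℝ) else 0) * pd j h x + x i * pd k (pd j h) x)
        - ((if j = k then (1:ℝ) else 0) * pd i h x + x j * pd k (pd i h) x) :=
    funext (pd_angDer hh i j k)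
  have dA1 : DifferentiableAt ℝ (fun x : E3 => (if i = k then (1:ℝ) else 0) * pd j h x) x :=
    dAt (contDiff_const.mul (smooth_pd hh j)) x
  have dA2 : DifferentiableAt ℝ (fun x : E3 => x i * pd k (pd j h) x) x :=
    dAt ((smooth_coord i).mul (smooth_pd (smooth_pd hh j) k)) x
  have dB1 : DifferentiableAt ℝ (fun x : E3 => (if j = k then (1:ℝ) else 0) * pd i h x) x :=
    dAt (contDiff_const.mul (smooth_pd hh i)) x
  have dB2 : DifferentiableAt ℝ (fun x : E3 => x j * pd k (pd i h) x) x :=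
    dAt ((smooth_coord j).mul (smooth_pd (smooth_pd hh i) k)) x
  rw [hfe, pd_sub (dA1.fun_add dA2) (dB1.fun_add dB2) k, pd_add dA1 dA2 k, pd_add dB1 dB2 k,
    pd_const_mul (dAt (smooth_pd hh j) x) _ k, pd_const_mul (dAt (smooth_pd hh i) x) _ k,
    pd_coord_mul (dAt (smooth_pd (smooth_pd hh j) k) x) i k,
    pd_coord_mul (dAt (smooth_pd (smooth_pd hh i) k) x) j k]
  ring

lemma pd_lap {h : E3 → ℝ} (hh : SM h) (j : Fin 3) (x : E3) :
    pd j (lap h) x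
      = pd 0 (pd 0 (pd j h)) x + pd 1 (pd 1 (pd j h)) x + pd 2 (pd 2 (pd j h)) x := by
  have d0 : DifferentiableAt ℝ (pd 0 (pd 0 h)) x := dAt (smooth_pd (smooth_pd hh 0) 0) x
  have d1 : DifferentiableAt ℝ (pd 1 (pd 1 h)) x := dAt (smooth_pd (smooth_pd hh 1) 1) x
  have d2 : DifferentiableAt ℝ (pd 2 (pd 2 h)) x := dAt (smooth_pd (smooth_pd hh 2) 2) x
  have step : pd j (lap h) x
      = pd j (pd 0 (pd 0 h)) x + pd j (pd 1 (pd 1 h)) x + pd j (pd 2 (pd 2 h)) x := by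
    show pd j (fun y => pd 0 (pd 0 h) y + pd 1 (pd 1 h) y + pd 2 (pd 2 h) y) x = _
    rw [pd_add (d0.fun_add d1) d2 j, pd_add d0 d1 j]
  rw [step, pd_comm (smooth_pd hh 0) j 0 x, pd_comm (smooth_pd hh 1) j 1 x,
    pd_comm (smooth_pd hh 2) j 2 x,
    funext (pd_comm hh j 0), funext (pd_comm hh j 1), funext (pd_comm hh j 2)]

lemma pd_rad {h : E3 → ℝ} (hh : SM h) (j : Fin 3) (x : E3) :
    pd j (rad h) x = pd j h x
      + (x 0 * pd 0 (pd j h) x + x 1 * pd 1 (pd j h) x + x 2 * pd 2 (pd j h) x) := by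
  have d0 : DifferentiableAt ℝ (fun y : E3 => y 0 * pd 0 h y) x :=
    dAt ((smooth_coord 0).mul (smooth_pd hh 0)) x
  have d1 : DifferentiableAt ℝ (fun y : E3 => y 1 * pd 1 h y) x :=
    dAt ((smooth_coord 1).mul (smooth_pd hh 1)) x
  have d2 : DifferentiableAt ℝ (fun y : E3 => y 2 * pd 2 h y) x :=
    dAt ((smooth_coord 2).mul (smooth_pd hh 2)) x
  rw [rad_fun, pd_add (d0.fun_add d1) d2 j, pd_add d0 d1 j,
    pd_coord_mul (dAt (smooth_pd hh 0) x) 0 j, pd_coord_mul (dAt (smooth_pd hh 1) x) 1 j,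
    pd_coord_mul (dAt (smooth_pd hh 2) x) 2 j,
    pd_comm hh j 0 x, pd_comm hh j 1 x, pd_comm hh j 2 x]
  linear_combination deltaR j (fun m => pd m h x)

lemma lap_angDer {h : E3 → ℝ} (hh : SM h) (i j : Fin 3) (x : E3) :
    lap (angDer i j h) x = x i * pd j (lap h) x - x j * pd i (lap h) x := by
  have e0 := pd_pd_angDer hh i j 0 x
  have e1 := pd_pd_angDer hh i j 1 x
  have e2 := pd_pd_angDer hh i j 2 x
  have comm : pd i (pd j h) x = pd j (pd i h) x := pd_comm hh i j x
  show pd 0 (pd 0 (angDer i j h)) x + pd 1 (pd 1 (angDer i j h)) x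
      + pd 2 (pd 2 (angDer i j h)) x = _
  rw [e0, e1, e2, pd_lap hh j x, pd_lap hh i x]
  linear_combination 2 * deltaL i (fun k => pd k (pd j h) x)
    - 2 * deltaL j (fun k => pd k (pd i h) x) + 2 * comm

lemma rad_angDer {h : E3 → ℝ} (hh : SM h) (i j : Fin 3) (x : E3) :
    rad (angDer i j h) x = angDer i j (rad h) x := by
  rw [rad_eq, pd_angDer hh i j 0 x, pd_angDer hh i j 1 x, pd_angDer hh i j 2 x]
  show _ = x i * pd j (rad h) x - x j * pd i (rad h) x
  rw [pd_rad hh j x, pd_rad hh i x]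
  linear_combination deltaL i (fun k => x k * pd j h x) - deltaL j (fun k => x k * pd i h x)

lemma pd_normsq_mul {h : E3 → ℝ} (hh : SM h) (k : Fin 3) (x : E3) :
    pd k (fun y => ‖y‖^2 * h y) x = 2 * x k * h x + ‖x‖^2 * pd k h x := by
  have dh := dAt hh x
  have c0 : DifferentiableAt ℝ (fun y : E3 => y 0 * h y) x :=
    dAt ((smooth_coord 0).mul hh) x
  have c1 : DifferentiableAt ℝ (fun y : E3 => y 1 * h y) x :=
    dAt ((smooth_coord 1).mul hh) x
  have c2 : DifferentiableAt ℝ (fun y : E3 => y 2 * h y) x :=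
    dAt ((smooth_coord 2).mul hh) x
  have d0 : DifferentiableAt ℝ (fun y : E3 => y 0 * (y 0 * h y)) x :=
    dAt ((smooth_coord 0).mul ((smooth_coord 0).mul hh)) x
  have d1 : DifferentiableAt ℝ (fun y : E3 => y 1 * (y 1 * h y)) x :=
    dAt ((smooth_coord 1).mul ((smooth_coord 1).mul hh)) x
  have d2 : DifferentiableAt ℝ (fun y : E3 => y 2 * (y 2 * h y)) x :=
    dAt ((smooth_coord 2).mul ((smooth_coord 2).mul hh)) x
  rw [normsq_mul_fun, pd_add (d0.fun_add d1) d2 k, pd_add d0 d1 k,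
    pd_coord_mul c0 0 k, pd_coord_mul c1 1 k, pd_coord_mul c2 2 k,
    pd_coord_mul dh 0 k, pd_coord_mul dh 1 k, pd_coord_mul dh 2 k, normsq x]
  linear_combination 2 * deltaR k (fun m => x m * h x)

lemma normsq_angDer {h : E3 → ℝ} (hh : SM h) (i j : Fin 3) (x : E3) :
    ‖x‖^2 * angDer i j h x
      = x i * pd j (fun y => ‖y‖^2 * h y) x - x j * pd i (fun y => ‖y‖^2 * h y) x := by
  rw [pd_normsq_mul hh j x, pd_normsq_mul hh i x]
  show ‖x‖^2 * (x i * pd j h x - x j * pd i h x) = _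
  ring

lemma SL_comm {f : E3 → ℝ} (hf : SM f) (α c : ℝ) (i j : Fin 3) (x : E3) :
    SL α c (angDer i j f) x = angDer i j (SL α c f) x := by
  have hrf : SM (rad f) := smooth_rad hf
  have L1 := lap_angDer hf i j x
  have hradfun : rad (angDer i j f) = angDer i j (rad f) := funext (rad_angDer hf i j)
  have L2 : rad (rad (angDer i j f)) x
      = x i * pd j (rad (rad f)) x - x j * pd i (rad (rad f)) x := by
    rw [hradfun]
    have := rad_angDer hrf i j x
    rw [this]; rfl
  have L3 : rad (angDer i j f) x = x i * pd j (rad f) x - x j * pd i (rad f) x :=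
    rad_angDer hf i j x
  have L4 := normsq_angDer hf i j x
  have R : ∀ k : Fin 3, pd k (SL α c f) x
      = -pd k (lap f) x + pd k (rad (rad f)) x + (2*α+3) * pd k (rad f) x
        + c^2 * pd k (fun y => ‖y‖^2 * f y) x := by
    intro k
    have dlap : DifferentiableAt ℝ (lap f) x := dAt (smooth_lap hf) x
    have dnl : DifferentiableAt ℝ (fun y : E3 => -lap f y) x := dlap.neg
    have drr : DifferentiableAt ℝ (rad (rad f)) x := dAt (smooth_rad hrf) x
    have drf : DifferentiableAt ℝ (rad f) x := dAt hrf x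
    have dcr : DifferentiableAt ℝ (fun y : E3 => (2*α+3) * rad f y) x := drf.const_mul _
    have dns : DifferentiableAt ℝ (fun y : E3 => ‖y‖^2 * f y) x :=
      dAt (smooth_normsq_mul hf) x
    have e : SL α c f = fun y =>
        (-lap f y + rad (rad f) y + (2*α+3) * rad f y) + c^2 * (‖y‖^2 * f y) := by
      funext y; simp only [SL]; ring
    rw [e, pd_add ((dnl.fun_add drr).fun_add dcr) (dns.const_mul _) k,
      pd_add (dnl.fun_add drr) dcr k, pd_add dnl drr k, pd_neg k,
      pd_const_mul drf _ k, pd_const_mul dns _ k]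
  have Rj := R j
  have Ri := R i
  show -lap (angDer i j f) x + rad (rad (angDer i j f)) x
      + (2*α+3) * rad (angDer i j f) x + c^2 * ‖x‖^2 * angDer i j f x
      = x i * pd j (SL α c f) x - x j * pd i (SL α c f) x
  rw [L1, L2, L3, Rj, Ri]
  linear_combination c^2 * L4

lemma angDer_const_mul {h : E3 → ℝ} (hh : SM h) (a : ℝ) (i j : Fin 3) (x : E3) :
    angDer i j (fun y => a * h y) x = a * angDer i j h x := by
  show x i * pd j (fun y => a * h y) x - x j * pd i (fun y => a * h y) x = _
  rw [pd_const_mul (dAt hh x) a j, pd_const_mul (dAt hh x) a i]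
  show _ = a * (x i * pd j h x - x j * pd i h x)
  ring

lemma SL_eig_angDer {f : E3 → ℝ} (hf : SM f) {α c χ : ℝ}
    (heig : ∀ x : E3, SL α c f x = χ * f x) (i j : Fin 3) (x : E3) :
    SL α c (angDer i j f) x = χ * angDer i j f x := by
  rw [SL_comm hf α c i j x, show SL α c f = fun y => χ * f y from funext heig,
    angDer_const_mul hf χ i j x]

lemma comp0 (f : E3 → ℝ) : (fun y => angGrad f y 0) = angDer 1 2 f := rfl
lemma comp1 (f : E3 → ℝ) : (fun y => angGrad f y 1) = angDer 2 0 f := rfl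
lemma comp2 (f : E3 → ℝ) : (fun y => angGrad f y 2) = angDer 0 1 f := rfl

lemma ext3 (a b : E3) (h0 : a 0 = b 0) (h1 : a 1 = b 1) (h2 : a 2 = b 2) : a = b := by
  apply (WithLp.equiv 2 (Fin 3 → ℝ)).injective
  funext k
  fin_cases k <;> assumption

/-- if L_c^{(α)}f = χ·f then x×∇f is a divergence free vectorial
eigenfunction of L_c^{(α)} with the same eigenvalue. -/
theorem stmt_17 (f : E3 → ℝ) (hf : ContDiff ℝ (⊤ : ℕ∞) f) (α c χ : ℝ)
    (heig : ∀ x : E3, SL α c f x = χ * f x) :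
    ∀ x : E3,
      SLv α c (angGrad f) x = χ • angGrad f x ∧ fdiv (angGrad f) x = 0 := by
  have hf' : SM f := hf.of_le (by simp)
  intro x
  constructor
  · apply ext3
    · show SL α c (fun y => angGrad f y 0) x = (χ • angGrad f x) 0
      rw [comp0, SL_eig_angDer hf' heig 1 2 x]
      show _ = χ * angGrad f x 0
      rw [show angGrad f x 0 = angDer 1 2 f x from congrFun (comp0 f) x]
    · show SL α c (fun y => angGrad f y 1) x = (χ • angGrad f x) 1
      rw [comp1, SL_eig_angDer hf' heig 2 0 x]
      show _ = χ * angGrad f x 1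
      rw [show angGrad f x 1 = angDer 2 0 f x from congrFun (comp1 f) x]
    · show SL α c (fun y => angGrad f y 2) x = (χ • angGrad f x) 2
      rw [comp2, SL_eig_angDer hf' heig 0 1 x]
      show _ = χ * angGrad f x 2
      rw [show angGrad f x 2 = angDer 0 1 f x from congrFun (comp2 f) x]
  · show pd 0 (fun y => angGrad f y 0) x + pd 1 (fun y => angGrad f y 1) x
        + pd 2 (fun y => angGrad f y 2) x = 0
    rw [comp0, comp1, comp2, pd_angDer hf' 1 2 0 x, pd_angDer hf' 2 0 1 x,
      pd_angDer hf' 0 1 2 x]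
    have e1 : pd 0 (pd 2 f) x = pd 2 (pd 0 f) x := pd_comm hf' 0 2 x
    have e2 : pd 0 (pd 1 f) x = pd 1 (pd 0 f) x := pd_comm hf' 0 1 x
    have e3 : pd 1 (pd 2 f) x = pd 2 (pd 1 f) x := pd_comm hf' 1 2 x
    have z1 : (if (1:Fin 3) = 0 then (1:ℝ) else 0) = 0 := by simp
    have z2 : (if (2:Fin 3) = 0 then (1:ℝ) else 0) = 0 := by simp
    have z3 : (if (2:Fin 3) = 1 then (1:ℝ) else 0) = 0 := by simp
    have z4 : (if (0:Fin 3) = 1 then (1:ℝ) else 0) = 0 := by simp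
    have z5 : (if (0:Fin 3) = 2 then (1:ℝ) else 0) = 0 := by simp
    have z6 : (if (1:Fin 3) = 2 then (1:ℝ) else 0) = 0 := by simp
    rw [z1, z2, z3, z4, z5, z6]
    linear_combination x 1 * e1 - x 2 * e2 - x 0 * e3
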